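/- arXiv:2504.11989 — 4 statements merged into one kernel-verified Lean document; each statement's English description precedes it below -/
import Mathlib

section
/- Let Λ = Aℤ^d be a Bravais lattice with A ∈ ℝ^{d×d} invertible, let n ∈ ℕ, n ≥ 1, and let ν ∈ ℂ^n with Re(ν_j) > d for all 1 ≤ j ≤ n. Then the n-body lattice sum ∑' ∏_{j=1}^n |x^(j) − x^(j−1)|^{−ν_j}, taken over x^(1),…,x^(n−1) ∈ Λ with x^(0) = x^(n) = 0 and excluding all tuples with x^(j) = x^(j−1) for some j, converges absolutely; hence the n-body zeta function ζ^(n)_Λ(ν) is well-defined. -/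
open MeasureTheory Complex
open scoped Real InnerProductSpace

/-- The lattice point `A m` for an integer vector `m`, as an element of Euclidean space. -/
noncomputable def latticePt {d : ℕ} (A : Matrix (Fin d) (Fin d) ℝ) (m : Fin d → ℤ) :
    EuclideanSpace ℝ (Fin d) :=
  WithLp.toLp 2 (A.mulVec fun j => (m j : ℝ))

/-- The Bravais lattice `Λ = A ℤ^d`. -/
def lattice {d : ℕ} (A : Matrix (Fin d) (Fin d) ℝ) : Set (EuclideanSpace ℝ (Fin d)) :=
  Set.range (latticePt A)

/-- The chain of points `x^(0), x^(1), …, x^(n)` with `x^(0) = x^(n) = 0` and inner points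
`x^(1), …, x^(n-1)` given by `x`. -/
def chainPt {d : ℕ} (n : ℕ) (x : Fin (n - 1) → EuclideanSpace ℝ (Fin d)) (j : ℕ) :
    EuclideanSpace ℝ (Fin d) :=
  if h : 0 < j ∧ j < n then x ⟨j - 1, by omega⟩ else 0

/-- The summand `∏_{j=1}^n |x^(j) - x^(j-1)|^{-ν_j}` of the `n`-body zeta function. -/
noncomputable def nBodySummand {d : ℕ} (n : ℕ) (ν : Fin n → ℂ)
    (x : Fin (n - 1) → EuclideanSpace ℝ (Fin d)) : ℂ :=
  ∏ j : Fin n, (‖chainPt n x ((j : ℕ) + 1) - chainPt n x (j : ℕ)‖ : ℂ) ^ (-(ν j))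

/-- The index set of the primed sum: all tuples `x^(1), …, x^(n-1)` of lattice points such
that no two consecutive chain points coincide. -/
def nBodyDomain {d : ℕ} (A : Matrix (Fin d) (Fin d) ℝ) (n : ℕ) :
    Set (Fin (n - 1) → EuclideanSpace ℝ (Fin d)) :=
  {x | (∀ i, x i ∈ lattice A) ∧
    ∀ j : Fin n, chainPt n x ((j : ℕ) + 1) ≠ chainPt n x (j : ℕ)}

/-- The `n`-body zeta function `ζ^(n)_Λ(ν)`. -/
noncomputable def nBodyZeta {d : ℕ} (A : Matrix (Fin d) (Fin d) ℝ) (n : ℕ)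
    (ν : Fin n → ℂ) : ℂ :=
  ∑' x : nBodyDomain A n, nBodySummand n ν x.1

/-!
Substituting the steps `y_j = x^(j+1) - x^(j)`, `j < n - 1`, for the inner points is injective,
and the remaining step `x^(n) - x^(n-1)` is itself a lattice point, so its factor is bounded by the
full lattice sum `∑_{v ∈ Λ} |v|^{-Re ν_n}`. The `n`-body sum is therefore dominated by a product of
`n` lattice sums `∑_{v ∈ Λ} |v|^{-Re ν_j}`, each of which converges because `Λ` is a discrete
`ℤ`-lattice of rank `d < Re ν_j`.
-/

open Module Submodule

theorem summable_pi_prod_of_nonneg {ι β : Type*} [Fintype ι] {f : ι → β → ℝ}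
    (hf_nonneg : ∀ i b, 0 ≤ f i b) (hf : ∀ i, Summable (f i)) :
    Summable fun x : ι → β => ∏ i, f i (x i) := by
  classical
  refine summable_of_sum_le (c := ∏ i, ∑' b, f i b)
    (fun x => Finset.prod_nonneg fun i _ => hf_nonneg i (x i)) fun s => ?_
  have hsub : s ⊆ Fintype.piFinset fun i => s.image (· i) :=
    fun x hx => Fintype.mem_piFinset.2 fun i => Finset.mem_image_of_mem _ hx
  calc ∑ x ∈ s, ∏ i, f i (x i)
      ≤ ∑ x ∈ Fintype.piFinset fun i => s.image (· i), ∏ i, f i (x i) :=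
        Finset.sum_le_sum_of_subset_of_nonneg hsub
          (fun x _ _ => Finset.prod_nonneg fun i _ => hf_nonneg i (x i))
    _ = ∏ i, ∑ b ∈ s.image (· i), f i b := (Finset.prod_univ_sum _ _).symm
    _ ≤ ∏ i, ∑' b, f i b :=
        Finset.prod_le_prod (fun i _ => Finset.sum_nonneg fun b _ => hf_nonneg i b)
          fun i _ => (hf i).sum_le_tsum _ fun b _ => hf_nonneg i b

theorem ZLattice.summable_pi_prod_norm_rpow {E : Type*} [NormedAddCommGroup E] [NormedSpace ℝ E]
    [FiniteDimensional ℝ E] (L : Submodule ℤ E) [DiscreteTopology L] {ι : Type*} [Fintype ι]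
    {s : ι → ℝ} (hs : ∀ i, (finrank ℤ L : ℝ) < s i) :
    Summable fun y : ι → L => ∏ i, ‖y i‖ ^ (-s i) :=
  summable_pi_prod_of_nonneg (f := fun i (v : L) => ‖v‖ ^ (-s i))
    (fun _ v => Real.rpow_nonneg (norm_nonneg v) _)
    fun i => ZLattice.summable_norm_rpow L _ (neg_lt_neg (hs i))

section Chain

variable {d n : ℕ}

local notation "E" => EuclideanSpace ℝ (Fin d)

def chainStep (n : ℕ) (x : Fin (n - 1) → E) (j : ℕ) : E :=
  chainPt n x (j + 1) - chainPt n x j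

theorem chainPt_zero (x : Fin (n - 1) → E) : chainPt n x 0 = 0 := by
  simp [chainPt]

theorem chainPt_succ (x : Fin (n - 1) → E) (i : Fin (n - 1)) : chainPt n x (i + 1) = x i := by
  rw [chainPt, dif_pos (by omega)]
  simp

theorem chainPt_mem {L : Submodule ℤ E} {x : Fin (n - 1) → E} (hx : ∀ i, x i ∈ L) (j : ℕ) :
    chainPt n x j ∈ L := by
  unfold chainPt
  split
  · exact hx _
  · exact L.zero_mem

theorem chainStep_mem {L : Submodule ℤ E} {x : Fin (n - 1) → E} (hx : ∀ i, x i ∈ L) (j : ℕ) :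
    chainStep n x j ∈ L :=
  L.sub_mem (chainPt_mem hx _) (chainPt_mem hx _)

theorem chainStep_injective :
    Function.Injective fun (x : Fin (n - 1) → E) (j : Fin (n - 1)) => chainStep n x j := by
  intro x y h
  have hpt : ∀ j < n, chainPt n x j = chainPt n y j := by
    intro j
    induction j with
    | zero => simp [chainPt_zero]
    | succ j ih =>
      intro hj
      have hstep := congrFun h ⟨j, by omega⟩
      simp only [chainStep] at hstep
      rwa [ih (by omega), sub_left_inj] at hstep
  funext i
  rw [← chainPt_succ x i, ← chainPt_succ y i, hpt _ (by omega)]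

/-- As `0 ^ (-ν) = 0` and `0 ^ (-Re ν) = 0` when `Re ν ≠ 0`, this holds also for tuples with a
vanishing step. -/
theorem norm_nBodySummand (ν : Fin n → ℂ) (hν : ∀ j, (ν j).re ≠ 0) (x : Fin (n - 1) → E) :
    ‖nBodySummand n ν x‖ = ∏ j : Fin n, ‖chainStep n x j‖ ^ (-(ν j).re) := by
  rw [nBodySummand, norm_prod]
  refine Finset.prod_congr rfl fun j _ => ?_
  rw [Complex.norm_cpow_eq_rpow_re_of_nonneg (norm_nonneg _) (by simpa using hν j)]
  simp [chainStep]

theorem summable_norm_nBodySummand (L : Submodule ℤ E) [DiscreteTopology L] (ν : Fin n → ℂ)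
    (hν : ∀ j, (finrank ℤ L : ℝ) < (ν j).re) :
    Summable fun x : {x : Fin (n - 1) → E // ∀ i, x i ∈ L} => ‖nBodySummand n ν x.1‖ := by
  cases n with
  | zero =>
    have : IsEmpty (Fin (0 - 1)) := inferInstanceAs (IsEmpty (Fin 0))
    exact Summable.of_finite
  | succ k =>
    let steps (x : {x : Fin k → E // ∀ i, x i ∈ L}) (j : Fin k) : L :=
      ⟨chainStep (k + 1) x.1 j, chainStep_mem (n := k + 1) x.2 j⟩
    have hsteps : Function.Injective steps := fun x y h => Subtype.ext <|
      chainStep_injective (n := k + 1) (funext fun j => congrArg Subtype.val (congrFun h j))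
    let C := ∑' v : L, ‖v‖ ^ (-(ν (Fin.last k)).re)
    have hlast (v : L) : ‖v‖ ^ (-(ν (Fin.last k)).re) ≤ C :=
      (ZLattice.summable_norm_rpow L _ (neg_lt_neg (hν _))).le_tsum v
        fun _ _ => Real.rpow_nonneg (norm_nonneg _) _
    have hdominant :=
      (ZLattice.summable_pi_prod_norm_rpow L fun j => hν (Fin.castSucc j)).mul_right C
    refine Summable.of_nonneg_of_le (fun _ => norm_nonneg _) (fun x => ?_)
      (hdominant.comp_injective hsteps)
    have hre (j : Fin (k + 1)) : (ν j).re ≠ 0 := ((Nat.cast_nonneg _).trans_lt (hν j)).ne'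
    rw [norm_nBodySummand ν hre x.1, Fin.prod_univ_castSucc]
    exact mul_le_mul_of_nonneg_left (hlast ⟨_, chainStep_mem (n := k + 1) x.2 k⟩)
      (Finset.prod_nonneg fun j _ => Real.rpow_nonneg (norm_nonneg _) _)

end Chain

section Lattice

variable {d : ℕ} (A : Matrix (Fin d) (Fin d) ℝ) (hA : IsUnit A.det)

noncomputable def latticeBasis : Basis (Fin d) ℝ (EuclideanSpace ℝ (Fin d)) :=
  basisOfLinearIndependentOfCardEqFinrank' (fun i => WithLp.toLp 2 (A.col i))
    ((Matrix.linearIndependent_cols_iff_isUnit.2 ((Matrix.isUnit_iff_isUnit_det A).2 hA)).map'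
      (WithLp.linearEquiv 2 ℝ (Fin d → ℝ)).symm.toLinearMap (LinearEquiv.ker _))
    (by simp)

theorem coe_latticeBasis : ⇑(latticeBasis A hA) = fun i => WithLp.toLp 2 (A.col i) :=
  coe_basisOfLinearIndependentOfCardEqFinrank' _ _ _

theorem latticePt_eq_sum (m : Fin d → ℤ) :
    latticePt A m = ∑ i, m i • WithLp.toLp 2 (A.col i) := by
  ext j
  simp [latticePt, Matrix.mulVec, dotProduct, mul_comm]

theorem lattice_eq_span : lattice A = span ℤ (Set.range (latticeBasis A hA)) := by
  ext v
  rw [SetLike.mem_coe, mem_span_range_iff_exists_fun, lattice, Set.mem_range]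
  simp only [latticePt_eq_sum, coe_latticeBasis]

end Lattice

theorem nBody_summable_general (d n : ℕ) (A : Matrix (Fin d) (Fin d) ℝ)
    (hA : IsUnit A.det) (ν : Fin n → ℂ) (hν : ∀ j, (d : ℝ) < (ν j).re) :
    Summable fun x : nBodyDomain A n => ‖nBodySummand n ν x.1‖ := by
  set L := span ℤ (Set.range (latticeBasis A hA))
  have hrank : finrank ℤ L = d := by rw [ZLattice.rank ℝ L, finrank_euclideanSpace_fin]
  have hdom : nBodyDomain A n ⊆ {x | ∀ i, x i ∈ L} := fun x hx i => by
    simpa only [lattice_eq_span A hA, SetLike.mem_coe] using hx.1 i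
  have hL := summable_norm_nBodySummand L ν (by rw [hrank]; exact hν)
  exact (hL.comp_injective (Set.inclusion_injective hdom) :)

/-- For `Re ν_j > d` for all `j`, the `n`-body lattice sum converges
absolutely, so that the `n`-body zeta function is well-defined. -/
theorem nBody_summable (d n : ℕ) (hn : 1 ≤ n) (A : Matrix (Fin d) (Fin d) ℝ)
    (hA : IsUnit A.det) (ν : Fin n → ℂ) (hν : ∀ j, (d : ℝ) < (ν j).re) :
    Summable fun x : nBodyDomain A n => ‖nBodySummand n ν x.1‖ :=
  nBody_summable_general d n A hA ν hν
end

section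
/- Let Λ = Aℤ^d be a Bravais lattice with A ∈ ℝ^{d×d} invertible, let V_Λ = |det A|, let BZ = A^{-T}(−1/2,1/2)^d, and let ν₁, ν₂ ∈ ℂ with Re(ν₁) > d and Re(ν₂) > d. Then V_Λ ∫_{BZ} Z_{Λ,ν₁}(k) Z_{Λ,ν₂}(k) dk = Z_{Λ,ν₁+ν₂}(0), i.e. the two-body zeta function reduces to the Epstein zeta function with exponent ν₁ + ν₂ evaluated at k = 0. -/
open MeasureTheory Complex
open scoped Real InnerProductSpace

/-- The Brillouin zone `BZ = A^{-T} (-1/2, 1/2)^d`. -/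
noncomputable def brillouinZone {d : ℕ} (A : Matrix (Fin d) (Fin d) ℝ) :
    Set (EuclideanSpace ℝ (Fin d)) :=
  (fun p : Fin d → ℝ => (WithLp.toLp 2 ((A.transpose)⁻¹.mulVec p) : EuclideanSpace ℝ (Fin d))) ''
    Set.univ.pi fun _ => Set.Ioo (-(1/2) : ℝ) (1/2)

/-- The Epstein zeta function `Z_{Λ,ν}(k) = ∑_{z ∈ Λ, z ≠ 0} e^{-2πi z·k} / |z|^ν`. -/
noncomputable def epsteinZeta {d : ℕ} (A : Matrix (Fin d) (Fin d) ℝ) (ν : ℂ)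
    (k : EuclideanSpace ℝ (Fin d)) : ℂ :=
  ∑' z : {z : EuclideanSpace ℝ (Fin d) // z ∈ lattice A ∧ z ≠ 0},
    Complex.exp (-(2 * (π : ℂ) * Complex.I) * (⟪z.1, k⟫_ℝ : ℂ)) / (‖z.1‖ : ℂ) ^ ν

/-! Substituting `k = A⁻ᵀ p` maps the unit cube onto the Brillouin zone with Jacobian `V_Λ⁻¹` and
turns `Z_{Λ,ν}` into the absolutely convergent Fourier series `∑_m |A m|^{-ν} e^{-2πi m·p}` over
`ℤ^d`. The product of two such series can be integrated term by term; orthogonality of the plane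
waves on the cube keeps only the pairs `(m, -m)`, and `|A (-m)| = |A m|` leaves
`∑_m |A m|^{-(ν₁+ν₂)} = Z_{Λ,ν₁+ν₂}(0)`. -/

namespace Module.Basis

variable {E : Type*} [NormedAddCommGroup E] [NormedSpace ℝ E] {ι : Type*} [Fintype ι]
  (b : Basis ι ℝ E)

lemma coe_restrictScalars_int_equivFun_symm (m : ι → ℤ) :
    ((b.restrictScalars ℤ).equivFun.symm m : E) = ∑ i, m i • b i := by
  simp [Basis.equivFun_symm_apply]

lemma injective_sum_zsmul : Function.Injective fun m : ι → ℤ => ∑ i, m i • b i := by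
  simpa only [Function.comp_def, coe_restrictScalars_int_equivFun_symm] using
    Subtype.val_injective.comp (b.restrictScalars ℤ).equivFun.symm.injective

lemma summable_norm_sum_zsmul_rpow [FiniteDimensional ℝ E] {r : ℝ}
    (hr : r < -Fintype.card ι) : Summable fun m : ι → ℤ => ‖∑ i, m i • b i‖ ^ r := by
  have hrank : Module.finrank ℤ (Submodule.span ℤ (Set.range b)) = Fintype.card ι := by
    rw [ZLattice.rank ℝ, Module.finrank_eq_card_basis b]
  simpa only [Function.comp_def, Submodule.coe_norm, coe_restrictScalars_int_equivFun_symm] using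
    (ZLattice.summable_norm_rpow _ r (hrank ▸ hr)).comp_injective
      (b.restrictScalars ℤ).equivFun.symm.injective

end Module.Basis

lemma setIntegral_image_toLp_mulVec {ι : Type*} [Fintype ι] [DecidableEq ι]
    {M : Matrix ι ι ℝ} (hM : IsUnit M.det) {s : Set (ι → ℝ)} (hs : MeasurableSet s)
    (g : EuclideanSpace ℝ ι → ℂ) :
    ∫ k in (fun p => WithLp.toLp 2 (M.mulVec p)) '' s, g k =
      |M.det| • ∫ p in s, g (WithLp.toLp 2 (M.mulVec p)) := by
  let L : (ι → ℝ) →L[ℝ] (ι → ℝ) := LinearMap.toContinuousLinearMap (Matrix.toLin' M)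
  have hL : Function.Injective L :=
    (Matrix.mulVec_injective_iff_isUnit.mpr ((M.isUnit_iff_isUnit_det).mpr hM))
  rw [← Set.image_image (WithLp.toLp 2) M.mulVec,
    (PiLp.volume_preserving_toLp ι).setIntegral_image_emb
      (MeasurableEquiv.toLp 2 (ι → ℝ)).measurableEmbedding, show M.mulVec = L from rfl,
    integral_image_eq_integral_abs_det_fderiv_smul volume hs
      (fun p _ => L.hasFDerivAt.hasFDerivWithinAt) hL.injOn, integral_smul]
  simp [L, ContinuousLinearMap.det, LinearMap.det_toLin']

section PlaneWave

variable {ι : Type*} [Fintype ι]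

def unitCube (ι : Type*) : Set (ι → ℝ) :=
  Set.univ.pi fun _ => Set.Ioo (-(1 / 2)) (1 / 2)

noncomputable def planeWave (m : ι → ℤ) (p : ι → ℝ) : ℂ :=
  exp (-(2 * π * I) * ((∑ j, (m j : ℝ) * p j : ℝ) : ℂ))

lemma measurableSet_unitCube : MeasurableSet (unitCube ι) :=
  .univ_pi fun _ => measurableSet_Ioo

lemma volume_unitCube : volume (unitCube ι) = 1 := by
  norm_num [unitCube, volume_pi_pi, Real.volume_Ioo]

instance : IsFiniteMeasure (volume.restrict (unitCube ι)) :=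
  ⟨by simp [volume_unitCube]⟩

lemma setIntegral_Ioo_exp_int_mul (n : ℤ) :
    ∫ t in Set.Ioo (-(1 / 2) : ℝ) (1 / 2), exp (-(2 * π * I) * n * t) =
      if n = 0 then 1 else 0 := by
  split_ifs with hn
  · norm_num [hn]
  set c : ℂ := -(2 * π * I) * n
  have hc : c ≠ 0 := by simp [c, Real.pi_ne_zero, I_ne_zero, hn]
  -- `exp c = 1`, so the primitive `exp (c t) / c` takes the same value at `±1/2`.
  have hperiod : exp (c * (1 / 2 : ℝ)) = exp (c * (-(1 / 2) : ℝ)) := by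
    rw [show c * (1 / 2 : ℝ) = (-n : ℤ) * (2 * π * I) + c * (-(1 / 2) : ℝ) by
      simp only [c]; push_cast; ring, exp_add, exp_int_mul_two_pi_mul_I, one_mul]
  rw [← integral_Ioc_eq_integral_Ioo, ← intervalIntegral.integral_of_le (by norm_num),
    integral_exp_mul_complex hc, hperiod, sub_self, zero_div]

lemma planeWave_eq_prod (m : ι → ℤ) (p : ι → ℝ) :
    planeWave m p = ∏ j, exp (-(2 * π * I) * m j * p j) := by
  rw [planeWave, ← exp_sum]
  push_cast
  rw [Finset.mul_sum]
  simp only [mul_assoc]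

lemma setIntegral_unitCube_prod (f : ι → ℝ → ℂ) :
    ∫ p in unitCube ι, ∏ j, f j (p j) = ∏ j, ∫ t in Set.Ioo (-(1 / 2) : ℝ) (1 / 2), f j t := by
  rw [unitCube, volume_pi, Measure.restrict_pi_pi, integral_fintype_prod_eq_prod]

lemma setIntegral_unitCube_planeWave [DecidableEq ι] (m : ι → ℤ) :
    ∫ p in unitCube ι, planeWave m p = if m = 0 then 1 else 0 := by
  simp_rw [planeWave_eq_prod]
  rw [setIntegral_unitCube_prod fun j t => exp (-(2 * π * I) * m j * t)]
  simp_rw [setIntegral_Ioo_exp_int_mul]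
  split_ifs with hm
  · simp [hm]
  · obtain ⟨j, hj⟩ := Function.ne_iff.mp hm
    exact Finset.prod_eq_zero (Finset.mem_univ j) (if_neg hj)

lemma norm_planeWave (m : ι → ℤ) (p : ι → ℝ) : ‖planeWave m p‖ = 1 := by
  rw [planeWave, norm_exp]
  simp

lemma planeWave_add (m n : ι → ℤ) (p : ι → ℝ) :
    planeWave (m + n) p = planeWave m p * planeWave n p := by
  simp only [planeWave, ← exp_add, ← mul_add, Pi.add_apply, Int.cast_add, add_mul,
    Finset.sum_add_distrib]
  push_cast
  ring_nf

lemma continuous_planeWave (m : ι → ℤ) : Continuous (planeWave m) := by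
  unfold planeWave
  fun_prop

lemma setIntegral_unitCube_tsum_mul_tsum [DecidableEq ι] {a b : (ι → ℤ) → ℂ}
    (ha : Summable (‖a ·‖)) (hb : Summable (‖b ·‖)) :
    ∫ p in unitCube ι, (∑' m, a m * planeWave m p) * (∑' m, b m * planeWave m p) =
      ∑' m, a m * b (-m) := by
  set F : (ι → ℤ) × (ι → ℤ) → (ι → ℝ) → ℂ := fun q p => a q.1 * b q.2 * planeWave (q.1 + q.2) p
  have hab : Summable fun q : (ι → ℤ) × (ι → ℤ) => ‖a q.1 * b q.2‖ := ha.mul_norm hb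
  have hnormF (q p) : ‖F q p‖ = ‖a q.1 * b q.2‖ := by simp [F, norm_planeWave]
  have hexpand (p) :
      (∑' m, a m * planeWave m p) * (∑' m, b m * planeWave m p) = ∑' q, F q p := by
    rw [tsum_mul_tsum_of_summable_norm (by simpa [norm_planeWave] using ha)
      (by simpa [norm_planeWave] using hb)]
    simp only [F, planeWave_add]
    congr with q
    ring
  have hF (q) : Integrable (F q) (volume.restrict (unitCube ι)) :=
    (integrable_const ‖a q.1 * b q.2‖).mono'
      ((continuous_const.mul (continuous_planeWave _)).aestronglyMeasurable)
      (ae_of_all _ fun p => (hnormF q p).le)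
  have hFsum : Summable fun q => ∫ p in unitCube ι, ‖F q p‖ := by
    simpa [hnormF, measureReal_def, volume_unitCube] using hab
  have hG : Summable fun q : (ι → ℤ) × (ι → ℤ) =>
      a q.1 * b q.2 * if q.1 + q.2 = 0 then 1 else 0 :=
    .of_norm_bounded hab fun q => by split_ifs <;> simp; positivity
  simp_rw [hexpand, ← integral_tsum_of_summable_integral_norm hF hFsum, F, integral_const_mul,
    setIntegral_unitCube_planeWave, hG.tsum_prod' hG.prod_factor, add_eq_zero_iff_eq_neg']
  simp [mul_ite]

end PlaneWave

section Lattice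

variable {d : ℕ} {A : Matrix (Fin d) (Fin d) ℝ}

noncomputable def columnBasis (A : Matrix (Fin d) (Fin d) ℝ) (hA : IsUnit A.det) :
    Module.Basis (Fin d) ℝ (EuclideanSpace ℝ (Fin d)) :=
  ((Pi.basisFun ℝ (Fin d)).map (A.toLinearEquiv' (A.invertibleOfIsUnitDet hA))).map
    (WithLp.linearEquiv 2 ℝ (Fin d → ℝ)).symm

lemma latticePt_eq_sum_zsmul (hA : IsUnit A.det) (m : Fin d → ℤ) :
    latticePt A m = ∑ i, m i • columnBasis A hA i := by
  have h (v : Fin d → ℝ) : A.toLinearEquiv' (A.invertibleOfIsUnitDet hA) v = A.mulVec v := rfl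
  ext j
  simp [latticePt, columnBasis, h, Matrix.mulVec, dotProduct, mul_comm]

lemma latticePt_injective (hA : IsUnit A.det) : Function.Injective (latticePt A) := by
  rw [funext (latticePt_eq_sum_zsmul hA)]
  exact (columnBasis A hA).injective_sum_zsmul

lemma summable_norm_latticePt_rpow (hA : IsUnit A.det) {r : ℝ} (hr : r < -d) :
    Summable fun m => ‖latticePt A m‖ ^ r := by
  simpa only [latticePt_eq_sum_zsmul hA] using
    (columnBasis A hA).summable_norm_sum_zsmul_rpow (by simpa using hr)

lemma latticePt_neg (m : Fin d → ℤ) : latticePt A (-m) = -latticePt A m := by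
  simp only [latticePt, Pi.neg_apply, Int.cast_neg]
  rw [← WithLp.toLp_neg, ← Matrix.mulVec_neg]
  rfl

lemma inner_latticePt_toLp_mulVec (hA : IsUnit A.det) (m : Fin d → ℤ) (p : Fin d → ℝ) :
    ⟪latticePt A m, WithLp.toLp 2 ((A.transpose)⁻¹.mulVec p)⟫_ℝ = ∑ j, (m j : ℝ) * p j := by
  have hAT := A.isUnit_det_transpose hA
  rw [latticePt, EuclideanSpace.inner_toLp_toLp, star_trivial, dotProduct_comm,
    Matrix.dotProduct_mulVec, ← Matrix.vecMul_transpose, Matrix.vecMul_vecMul,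
    Matrix.mul_nonsing_inv _ hAT, Matrix.vecMul_one]
  rfl

end Lattice

section Epstein

variable {d : ℕ} {A : Matrix (Fin d) (Fin d) ℝ}

noncomputable def epsteinCoeff (A : Matrix (Fin d) (Fin d) ℝ) (ν : ℂ) (m : Fin d → ℤ) : ℂ :=
  ((‖latticePt A m‖ : ℂ) ^ ν)⁻¹

lemma epsteinZeta_eq_tsum_epsteinCoeff (hA : IsUnit A.det) {ν : ℂ} (hν : ν ≠ 0)
    (k : EuclideanSpace ℝ (Fin d)) :
    epsteinZeta A ν k = ∑' m, epsteinCoeff A ν m *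
      exp (-(2 * π * I) * (⟪latticePt A m, k⟫_ℝ : ℂ)) := by
  set f : EuclideanSpace ℝ (Fin d) → ℂ :=
    fun z => exp (-(2 * π * I) * (⟪z, k⟫_ℝ : ℂ)) / (‖z‖ : ℂ) ^ ν
  -- The term of `z = 0` vanishes, since `0 ^ ν = 0` and `x / 0 = 0`.
  have hf0 : f 0 = 0 := by simp [f, zero_cpow hν]
  calc epsteinZeta A ν k = ∑' z : ↥{z | z ∈ lattice A ∧ z ≠ 0}, f z := rfl
    _ = ∑' z : ↥(lattice A), f z := by
      rw [tsum_subtype, tsum_subtype]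
      congr with z
      classical
      by_cases hz : z = 0 <;> simp [Set.indicator_apply, hz, hf0]
    _ = ∑' m, f (latticePt A m) := tsum_range f (latticePt_injective hA)
    _ = _ := by simp only [f, epsteinCoeff, div_eq_inv_mul]

lemma epsteinZeta_toLp_mulVec (hA : IsUnit A.det) {ν : ℂ} (hν : ν ≠ 0) (p : Fin d → ℝ) :
    epsteinZeta A ν (WithLp.toLp 2 ((A.transpose)⁻¹.mulVec p)) =
      ∑' m, epsteinCoeff A ν m * planeWave m p := by
  simp only [epsteinZeta_eq_tsum_epsteinCoeff hA hν, inner_latticePt_toLp_mulVec hA, planeWave]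

lemma epsteinZeta_zero (hA : IsUnit A.det) {ν : ℂ} (hν : ν ≠ 0) :
    epsteinZeta A ν 0 = ∑' m, epsteinCoeff A ν m := by
  simp [epsteinZeta_eq_tsum_epsteinCoeff hA hν]

lemma summable_norm_epsteinCoeff (hA : IsUnit A.det) {ν : ℂ} (hν : d < ν.re) :
    Summable fun m => ‖epsteinCoeff A ν m‖ := by
  have hre : ν.re ≠ 0 := by have := d.cast_nonneg (α := ℝ); linarith
  simpa [epsteinCoeff, norm_cpow_eq_rpow_re_of_nonneg (norm_nonneg _) hre,
    Real.rpow_neg (norm_nonneg _)] using summable_norm_latticePt_rpow hA (neg_lt_neg hν)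

lemma epsteinCoeff_mul_epsteinCoeff_neg {ν₁ ν₂ : ℂ} (hν : ν₁ + ν₂ ≠ 0) (m : Fin d → ℤ) :
    epsteinCoeff A ν₁ m * epsteinCoeff A ν₂ (-m) = epsteinCoeff A (ν₁ + ν₂) m := by
  simp only [epsteinCoeff, latticePt_neg, norm_neg]
  by_cases hm : (‖latticePt A m‖ : ℂ) = 0
  · rw [hm, zero_cpow hν, inv_zero]
    rcases eq_or_ne ν₁ 0 with rfl | hν₁
    · simp [zero_cpow (by simpa using hν)]
    · simp [zero_cpow hν₁]
  · rw [cpow_add _ _ hm, mul_inv]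

end Epstein

/-- For `Re ν₁ > d` and `Re ν₂ > d`,
`V_Λ ∫_BZ Z_{Λ,ν₁}(k) Z_{Λ,ν₂}(k) dk = Z_{Λ,ν₁+ν₂}(0)`. -/
theorem twoBodyZeta_eq_epsteinZeta (d : ℕ) (A : Matrix (Fin d) (Fin d) ℝ)
    (hA : IsUnit A.det) (ν₁ ν₂ : ℂ) (hν₁ : (d : ℝ) < ν₁.re) (hν₂ : (d : ℝ) < ν₂.re) :
    ((|A.det| : ℝ) : ℂ) *
        ∫ k in brillouinZone A, epsteinZeta A ν₁ k * epsteinZeta A ν₂ k =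
      epsteinZeta A (ν₁ + ν₂) 0 := by
  have hd : (0 : ℝ) ≤ d := d.cast_nonneg
  have hν₁0 : ν₁ ≠ 0 := by rintro rfl; simp at hν₁; linarith
  have hν₂0 : ν₂ ≠ 0 := by rintro rfl; simp at hν₂; linarith
  have hν0 : ν₁ + ν₂ ≠ 0 := by intro h; have := congrArg re h; simp at this; linarith
  have hAT : IsUnit (A.transpose)⁻¹.det :=
    Matrix.isUnit_nonsing_inv_det_iff.mpr (A.isUnit_det_transpose hA)
  rw [brillouinZone, ← unitCube, setIntegral_image_toLp_mulVec hAT measurableSet_unitCube]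
  simp_rw [epsteinZeta_toLp_mulVec hA hν₁0, epsteinZeta_toLp_mulVec hA hν₂0]
  rw [setIntegral_unitCube_tsum_mul_tsum (summable_norm_epsteinCoeff hA hν₁)
    (summable_norm_epsteinCoeff hA hν₂), epsteinZeta_zero hA hν0]
  simp_rw [epsteinCoeff_mul_epsteinCoeff_neg hν0]
  rw [Matrix.det_nonsing_inv, Matrix.det_transpose, Ring.inverse_eq_inv', abs_inv, real_smul,
    ← mul_assoc, ← ofReal_mul, mul_inv_cancel₀ (by simpa using hA.ne_zero), ofReal_one, one_mul]
end

section
/- Let d ∈ {1,2,3} and let Λ = Aℤ^d be a Bravais lattice with A ∈ ℝ^{d×d} invertible. Then the Axilrod-Teller-Muto lattice sum converges absolutely: ∑' |U^(3)_ATM(x,y)| < ∞, where the primed sum runs over pairs (x,y) ∈ Λ × Λ with x ≠ 0, y ≠ 0 and x ≠ y. -/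
open MeasureTheory Complex
open scoped Real InnerProductSpace

/-- The Axilrod–Teller–Muto three-body potential
`U^(3)_ATM(x,y) = |x|⁻³|y|⁻³|z|⁻³ − 3 (x·y)(y·z)(z·x)/(|x|⁵|y|⁵|z|⁵)` with `z = y − x`. -/
noncomputable def atmPotential {d : ℕ} (x y : EuclideanSpace ℝ (Fin d)) : ℝ :=
  ‖x‖ ^ (-3 : ℤ) * ‖y‖ ^ (-3 : ℤ) * ‖y - x‖ ^ (-3 : ℤ) -
    3 * (⟪x, y⟫_ℝ * ⟪y, y - x⟫_ℝ * ⟪y - x, x⟫_ℝ) / (‖x‖ ^ 5 * ‖y‖ ^ 5 * ‖y - x‖ ^ 5)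

/-- The index set of the primed sum: pairs `(x, y)` of lattice points with `x ≠ 0`,
`y ≠ 0`, `x ≠ y`. -/
def pairDomain {d : ℕ} (A : Matrix (Fin d) (Fin d) ℝ) :
    Set (EuclideanSpace ℝ (Fin d) × EuclideanSpace ℝ (Fin d)) :=
  {p | p.1 ∈ lattice A ∧ p.2 ∈ lattice A ∧ p.1 ≠ 0 ∧ p.2 ≠ 0 ∧ p.1 ≠ p.2}


/-!
Since `|x · y| ≤ |x| |y|`, the summand is at most `4 |x|⁻³ |y|⁻³ |y - x|⁻³`. The inverse norms
of lattice points are bounded by some `R`, and for `0 ≤ u, v, w ≤ R` one has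
`u³ v³ w³ ≤ R (u⁴ v⁴ + u⁴ w⁴ + v⁴ w⁴)`, since `w³ ≤ R u v` when `w` is the smallest. After the
change of variables `(x, y) ↦ (x, y - x)` each of the three resulting double sums is
`(∑_{x ∈ Λ} |x|⁻⁴)²`, which is finite because `4 > d`.
-/

open Module

lemma abs_atmPotential_le {d : ℕ} (x y : EuclideanSpace ℝ (Fin d)) :
    |atmPotential x y| ≤ 4 * (‖x‖⁻¹ ^ 3 * ‖y‖⁻¹ ^ 3 * ‖y - x‖⁻¹ ^ 3) := by
  set a := ‖x‖
  set b := ‖y‖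
  set c := ‖y - x‖
  have hinner : |⟪x, y⟫_ℝ * ⟪y, y - x⟫_ℝ * ⟪y - x, x⟫_ℝ| ≤ (a * b) * (b * c) * (c * a) := by
    rw [abs_mul, abs_mul]
    gcongr
    exacts [abs_real_inner_le_norm _ _, abs_real_inner_le_norm _ _, abs_real_inner_le_norm _ _]
  have hquot : (a * b) * (b * c) * (c * a) / (a ^ 5 * b ^ 5 * c ^ 5) =
      a⁻¹ ^ 3 * b⁻¹ ^ 3 * c⁻¹ ^ 3 := by
    rcases eq_or_ne a 0 with ha | ha; · simp [ha]
    rcases eq_or_ne b 0 with hb | hb; · simp [hb]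
    rcases eq_or_ne c 0 with hc | hc; · simp [hc]
    field_simp
  calc |atmPotential x y|
      ≤ |a⁻¹ ^ 3 * b⁻¹ ^ 3 * c⁻¹ ^ 3| +
          |3 * (⟪x, y⟫_ℝ * ⟪y, y - x⟫_ℝ * ⟪y - x, x⟫_ℝ) / (a ^ 5 * b ^ 5 * c ^ 5)| := by
        rw [atmPotential]
        simp only [zpow_neg, zpow_ofNat, inv_pow]
        exact abs_sub _ _
    _ ≤ a⁻¹ ^ 3 * b⁻¹ ^ 3 * c⁻¹ ^ 3 + 3 * (a⁻¹ ^ 3 * b⁻¹ ^ 3 * c⁻¹ ^ 3) := by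
        rw [abs_of_nonneg (by positivity), abs_div, abs_mul, abs_of_pos three_pos,
          abs_of_nonneg (by positivity : 0 ≤ a ^ 5 * b ^ 5 * c ^ 5), mul_div_assoc, ← hquot]
        gcongr
    _ = 4 * (a⁻¹ ^ 3 * b⁻¹ ^ 3 * c⁻¹ ^ 3) := by ring

lemma pow_three_mul_pow_three_mul_pow_three_le_of_le {u v w R : ℝ}
    (hu : 0 ≤ u) (hv : 0 ≤ v) (hw : 0 ≤ w)
    (hwu : w ≤ u) (hwv : w ≤ v) (hwR : w ≤ R) :
    u ^ 3 * v ^ 3 * w ^ 3 ≤ R * (u ^ 4 * v ^ 4) := by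
  have hR : 0 ≤ R := hw.trans hwR
  have : w * w * w ≤ R * u * v := mul_le_mul (mul_le_mul hwR hwu hw hR) hwv hw (mul_nonneg hR hu)
  calc u ^ 3 * v ^ 3 * w ^ 3 = u ^ 3 * v ^ 3 * (w * w * w) := by ring
    _ ≤ u ^ 3 * v ^ 3 * (R * u * v) := by gcongr
    _ = R * (u ^ 4 * v ^ 4) := by ring

lemma pow_three_mul_pow_three_mul_pow_three_le {u v w R : ℝ}
    (hu : 0 ≤ u) (hv : 0 ≤ v) (hw : 0 ≤ w)
    (huR : u ≤ R) (hvR : v ≤ R) (hwR : w ≤ R) :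
    u ^ 3 * v ^ 3 * w ^ 3 ≤ R * (u ^ 4 * v ^ 4 + u ^ 4 * w ^ 4 + v ^ 4 * w ^ 4) := by
  have hR : 0 ≤ R := hu.trans huR
  have huv₀ : 0 ≤ R * (u ^ 4 * v ^ 4) := by positivity
  have huw₀ : 0 ≤ R * (u ^ 4 * w ^ 4) := by positivity
  have hvw₀ : 0 ≤ R * (v ^ 4 * w ^ 4) := by positivity
  rcases le_total w u with hwu | huw
  · rcases le_total w v with hwv | hvw
    · linarith [pow_three_mul_pow_three_mul_pow_three_le_of_le hu hv hw hwu hwv hwR]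
    · linarith [pow_three_mul_pow_three_mul_pow_three_le_of_le hu hw hv (hvw.trans hwu) hvw hvR]
  · rcases le_total u v with huv | hvu
    · linarith [pow_three_mul_pow_three_mul_pow_three_le_of_le hv hw hu huv huw huR]
    · linarith [pow_three_mul_pow_three_mul_pow_three_le_of_le hu hw hv hvu (hvu.trans huw) hvR]

lemma summable_mul_add_mul_sub_add_mul_sub {G : Type*} [AddGroup G] {f : G → ℝ}
    (hf : Summable f) (h0 : 0 ≤ f) :
    Summable fun p : G × G => f p.1 * f p.2 + f p.1 * f (p.2 - p.1) + f p.2 * f (p.2 - p.1) := by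
  have hprod := hf.mul_of_nonneg hf h0 h0
  refine (hprod.add ?_).add ?_
  · exact hprod.comp_injective ((Equiv.refl G).prodShear Equiv.subRight).injective
  · exact hprod.comp_injective
      ((Equiv.prodComm G G).trans ((Equiv.refl G).prodShear Equiv.subLeft)).injective

lemma exists_forall_inv_norm_le {E : Type*} [SeminormedAddGroup E] [DiscreteTopology E] :
    ∃ R, ∀ z : E, ‖z‖⁻¹ ≤ R := by
  obtain ⟨ε, hε, hball⟩ := Metric.isOpen_singleton_iff.mp (isOpen_discrete {(0 : E)})
  refine ⟨ε⁻¹, fun z => ?_⟩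
  rcases eq_or_ne z 0 with rfl | hz
  · simpa using hε.le
  · exact inv_anti₀ hε (not_lt.mp fun h => hz (hball z (by simpa using h)))

-- The sum runs over all of `L × L`: at the degenerate pairs `x = 0`, `y = 0`, `x = y` the
-- potential takes the junk value `0`, as `‖0‖⁻¹ = 0` and `a / 0 = 0`.
theorem ZLattice.summable_abs_atmPotential {d : ℕ} (L : Submodule ℤ (EuclideanSpace ℝ (Fin d)))
    [DiscreteTopology L] (hL : finrank ℤ L < 4) :
    Summable fun p : L × L => |atmPotential (p.1 : EuclideanSpace ℝ (Fin d)) p.2| := by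
  obtain ⟨R, hR⟩ := exists_forall_inv_norm_le (E := L)
  have hf := ZLattice.summable_norm_pow_inv L 4 hL
  refine ((summable_mul_add_mul_sub_add_mul_sub hf fun _ => by positivity).mul_left
    (4 * R)).of_nonneg_of_le (fun _ => abs_nonneg _) fun p => ?_
  calc |atmPotential (p.1 : EuclideanSpace ℝ (Fin d)) p.2|
      ≤ 4 * (‖p.1‖⁻¹ ^ 3 * ‖p.2‖⁻¹ ^ 3 * ‖p.2 - p.1‖⁻¹ ^ 3) := abs_atmPotential_le _ _
    _ ≤ 4 * (R * (‖p.1‖⁻¹ ^ 4 * ‖p.2‖⁻¹ ^ 4 + ‖p.1‖⁻¹ ^ 4 * ‖p.2 - p.1‖⁻¹ ^ 4 +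
          ‖p.2‖⁻¹ ^ 4 * ‖p.2 - p.1‖⁻¹ ^ 4)) :=
        mul_le_mul_of_nonneg_left (pow_three_mul_pow_three_mul_pow_three_le (by positivity)
          (by positivity) (by positivity) (hR p.1) (hR p.2) (hR (p.2 - p.1))) zero_le_four
    _ = _ := by ring

theorem exists_discreteTopology_submodule_lattice_subset {d : ℕ}
    (A : Matrix (Fin d) (Fin d) ℝ) (hA : IsUnit A.det) :
    ∃ L : Submodule ℤ (EuclideanSpace ℝ (Fin d)),
      DiscreteTopology L ∧ finrank ℤ L ≤ d ∧ lattice A ⊆ L := by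
  let e := (EuclideanSpace.basisFun (Fin d) ℝ).toBasis
  let f := A.toLinearEquiv e hA
  let b := e.map f
  refine ⟨Submodule.span ℤ (Set.range b), inferInstance,
    by simpa [Set.finrank] using finrank_range_le_card (R := ℤ) b, ?_⟩
  rintro _ ⟨m, rfl⟩
  have hm : latticePt A m = f (WithLp.toLp 2 fun j => (m j : ℝ)) := rfl
  rw [SetLike.mem_coe, b.mem_span_iff_repr_mem ℤ, hm]
  intro i
  exact ⟨m i, by simp [b, e]⟩

/-- For `d ∈ {1,2,3}`, the Axilrod–Teller–Muto lattice sum converges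
absolutely: `∑' |U^(3)_ATM(x,y)| < ∞` over pairs of lattice points with `x ≠ 0`, `y ≠ 0`,
`x ≠ y`. -/
theorem atm_summable (d : ℕ) (hd : d = 1 ∨ d = 2 ∨ d = 3)
    (A : Matrix (Fin d) (Fin d) ℝ) (hA : IsUnit A.det) :
    Summable fun p : pairDomain A => |atmPotential p.1.1 p.1.2| := by
  obtain ⟨L, _, hLrank, hsub⟩ := exists_discreteTopology_submodule_lattice_subset A hA
  have hL : finrank ℤ L < 4 := by omega
  let i : pairDomain A → L × L := fun p => (⟨p.1.1, hsub p.2.1⟩, ⟨p.1.2, hsub p.2.2.1⟩)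
  have hi : Function.Injective i := fun p q h => by
    simp only [i, Prod.mk.injEq, Subtype.mk.injEq] at h
    exact Subtype.ext (Prod.ext h.1 h.2)
  exact ((ZLattice.summable_abs_atmPotential L hL).comp_injective hi :)
end

section
/- Let d ∈ ℕ, d ≥ 1, and let g : ℝ^d → ℂ be Lebesgue integrable on the cube [0,1/2]^d. Let σ denote the cyclic permutation of coordinates σ(x₁,…,x_d) = (x_d, x₁, …, x_{d−1}). Then the integral over the cube decomposes into d pyramid integrals: ∫_{[0,1/2]^d} g(k) dk = ∑_{j=0}^{d−1} ∫_0^{1/2} ∫_{[0,k_d]^{d−1}} g(σ^j(k₁,…,k_{d−1},k_d)) dk₁ ⋯ dk_{d−1} dk_d. -/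
/-!
Up to the null sets `{x | x i = x j}`, the cube `[0, a]^d` is the disjoint union of the pyramids
on which one coordinate is maximal. On the pyramid where `x_d` is maximal, Fubini with `t = x_d`
outermost gives the iterated integral over `t ∈ [0, a]` and the base `[0, t]^{d-1}`; and `σ^j`, a
measure preserving permutation of coordinates, carries this pyramid onto the `j`-th rotated one.
-/

open MeasureTheory

/-- The cyclic coordinate permutation `σ(x₁, …, x_d) = (x_d, x₁, …, x_{d-1})`. -/
def cyclicShift {d : ℕ} (x : Fin d → ℝ) : Fin d → ℝ := fun i => x ((finRotate d).symm i)

def pyramid {ι : Type*} (a : ℝ) (m : ι) : Set (ι → ℝ) :=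
  {x ∈ Set.univ.pi fun _ => Set.Icc 0 a | ∀ i, x i ≤ x m}

section Pyramid

variable {ι E : Type*} [NormedAddCommGroup E]

lemma measurableSet_pyramid [Countable ι] (a : ℝ) (m : ι) : MeasurableSet (pyramid a m) := by
  unfold pyramid
  measurability

lemma pyramid_subset_pi (a : ℝ) (m : ι) : pyramid a m ⊆ Set.univ.pi fun _ => Set.Icc 0 a :=
  Set.sep_subset _ _

lemma iUnion_pyramid [Finite ι] [Nonempty ι] (a : ℝ) :
    ⋃ m : ι, pyramid a m = Set.univ.pi fun _ => Set.Icc 0 a := by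
  refine subset_antisymm (Set.iUnion_subset (pyramid_subset_pi a)) fun x hx => ?_
  obtain ⟨m, hm⟩ := Finite.exists_max x
  exact Set.mem_iUnion.2 ⟨m, hx, hm⟩

lemma volume_setOf_apply_eq_apply [Fintype ι] {i j : ι} (hij : i ≠ j) :
    volume {x : ι → ℝ | x i = x j} = 0 := by
  classical
  let L : (ι → ℝ) →ₗ[ℝ] ℝ :=
    LinearMap.proj i - LinearMap.proj (R := ℝ) (φ := fun _ : ι => ℝ) j
  have hL : LinearMap.ker L ≠ ⊤ := fun h => by
    have : Pi.single i (1 : ℝ) ∈ LinearMap.ker L := h ▸ Submodule.mem_top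
    simp [L, hij.symm] at this
  convert Measure.addHaar_submodule volume _ hL using 2
  ext x
  simp [L, sub_eq_zero]

lemma pairwise_aedisjoint_pyramid [Fintype ι] (a : ℝ) :
    Pairwise fun m m' : ι => AEDisjoint volume (pyramid a m) (pyramid a m') := fun _ _ hmm' =>
  measure_mono_null (fun _ hx => le_antisymm (hx.2.2 _) (hx.1.2 _))
    (volume_setOf_apply_eq_apply hmm')

lemma setIntegral_pi_Icc_eq_sum_pyramid [Fintype ι] [Nonempty ι] [NormedSpace ℝ E] {a : ℝ}
    {g : (ι → ℝ) → E}
    (hg : IntegrableOn g (Set.univ.pi fun _ => Set.Icc 0 a)) :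
    ∫ x in Set.univ.pi fun _ => Set.Icc 0 a, g x = ∑ m, ∫ x in pyramid a m, g x := by
  rw [← iUnion_pyramid] at hg ⊢
  rw [integral_iUnion_ae (fun m => (measurableSet_pyramid a m).nullMeasurableSet)
    (pairwise_aedisjoint_pyramid a) hg, tsum_fintype]

lemma piCongrLeft_const_apply {β : Type*} [MeasurableSpace β] (e : ι ≃ ι) (x : ι → β)
    (i : ι) :
    MeasurableEquiv.piCongrLeft (fun _ => β) e x i = x (e.symm i) := by
  conv_lhs => rw [← e.apply_symm_apply i]
  exact MeasurableEquiv.piCongrLeft_apply_apply (β := fun _ => β) e x _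

lemma preimage_piCongrLeft_pyramid (e : ι ≃ ι) (a : ℝ) (m : ι) :
    MeasurableEquiv.piCongrLeft (fun _ => ℝ) e ⁻¹' pyramid a m = pyramid a (e.symm m) := by
  ext x
  simp only [pyramid, Set.mem_preimage, Set.mem_ofPred_eq, Set.mem_univ_pi,
    piCongrLeft_const_apply]
  exact and_congr (e.forall_congr_left (p := fun i => x i ∈ Set.Icc 0 a)).symm
    (e.forall_congr_left (p := fun i => x i ≤ x (e.symm m))).symm

variable [Fintype ι]

lemma integrableOn_pyramid_comp_piCongrLeft_iff (e : ι ≃ ι) {a : ℝ} {m : ι}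
    {g : (ι → ℝ) → E} :
    IntegrableOn (g ∘ MeasurableEquiv.piCongrLeft (fun _ => ℝ) e) (pyramid a m) ↔
      IntegrableOn g (pyramid a (e m)) := by
  have h := (volume_measurePreserving_piCongrLeft (fun _ => ℝ) e).integrableOn_comp_preimage
    (MeasurableEquiv.measurableEmbedding _) (f := g) (s := pyramid a (e m))
  rwa [preimage_piCongrLeft_pyramid, e.symm_apply_apply] at h

lemma setIntegral_pyramid_comp_piCongrLeft [NormedSpace ℝ E] (e : ι ≃ ι) (a : ℝ) (m : ι)
    (g : (ι → ℝ) → E) :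
    ∫ x in pyramid a m, g (MeasurableEquiv.piCongrLeft (fun _ => ℝ) e x) =
      ∫ x in pyramid a (e m), g x := by
  have h := (volume_measurePreserving_piCongrLeft (fun _ => ℝ) e).setIntegral_preimage_emb
    (MeasurableEquiv.measurableEmbedding _) g (pyramid a (e m))
  rwa [preimage_piCongrLeft_pyramid, e.symm_apply_apply] at h

end Pyramid

lemma setIntegral_prod_of_fiber {α β E : Type*} [MeasurableSpace α] [MeasurableSpace β]
    [NormedAddCommGroup E] [NormedSpace ℝ E] {μ : Measure α} {ν : Measure β} [SFinite μ]
    [SFinite ν] {s : Set α} {t : α → Set β} (hs : MeasurableSet s)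
    (ht : ∀ a, MeasurableSet (t a)) (hst : MeasurableSet {p : α × β | p.1 ∈ s ∧ p.2 ∈ t p.1})
    {f : α × β → E} (hf : IntegrableOn f {p | p.1 ∈ s ∧ p.2 ∈ t p.1} (μ.prod ν)) :
    ∫ p in {p | p.1 ∈ s ∧ p.2 ∈ t p.1}, f p ∂μ.prod ν = ∫ a in s, ∫ b in t a, f (a, b) ∂ν ∂μ := by
  rw [← integral_indicator hst, integral_prod _ ((integrable_indicator_iff hst).2 hf),
    ← integral_indicator hs]
  congr 1 with a
  by_cases ha : a ∈ s
  · rw [Set.indicator_of_mem ha, ← integral_indicator (ht a)]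
    congr 1 with b
    by_cases hb : b ∈ t a <;> simp [Set.indicator, ha, hb]
  · simp [Set.indicator, ha]

lemma preimage_snoc_pyramid_last {n : ℕ} (a : ℝ) :
    (fun p : ℝ × (Fin n → ℝ) => (Fin.snoc p.2 p.1 : Fin (n + 1) → ℝ)) ⁻¹'
        pyramid a (Fin.last n) =
      {p | p.1 ∈ Set.Icc 0 a ∧ p.2 ∈ Set.univ.pi fun _ => Set.Icc 0 p.1} := by
  ext ⟨t, v⟩
  simp only [pyramid, Set.mem_preimage, Set.mem_ofPred_eq, Set.mem_univ_pi, Fin.forall_fin_succ',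
    Fin.snoc_castSucc, Fin.snoc_last, Set.mem_Icc, le_refl, and_true]
  constructor
  · rintro ⟨⟨hv, ht⟩, hvt⟩
    exact ⟨ht, fun i => ⟨(hv i).1, hvt i⟩⟩
  · rintro ⟨ht, hv⟩
    exact ⟨⟨fun i => ⟨(hv i).1, (hv i).2.trans ht.2⟩, ht⟩, fun i => (hv i).2⟩

lemma setIntegral_pyramid_last {E : Type*} [NormedAddCommGroup E] [NormedSpace ℝ E] {n : ℕ}
    {a : ℝ} (ha : 0 ≤ a) {f : (Fin (n + 1) → ℝ) → E}
    (hf : IntegrableOn f (pyramid a (Fin.last n))) :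
    ∫ x in pyramid a (Fin.last n), f x =
      ∫ t in 0..a, ∫ v in Set.univ.pi fun _ : Fin n => Set.Icc 0 t, f (Fin.snoc v t) := by
  set e := (MeasurableEquiv.piFinSuccAbove (fun _ => ℝ) (Fin.last n)).symm
  have he : ⇑e = fun p : ℝ × (Fin n → ℝ) => (Fin.snoc p.2 p.1 : Fin (n + 1) → ℝ) := by
    funext p
    simp [e, MeasurableEquiv.piFinSuccAbove_symm_apply, Fin.insertNthEquiv]
  have hmp : MeasurePreserving e := (volume_preserving_piFinSuccAbove (fun _ => ℝ) _).symm _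
  have hpre := preimage_snoc_pyramid_last (n := n) a
  rw [← he] at hpre
  have hfe := (hmp.integrableOn_comp_preimage e.measurableEmbedding).2 hf
  rw [hpre, Measure.volume_eq_prod] at hfe
  have hmeas := hpre ▸ (measurableSet_pyramid a _).preimage e.measurable
  rw [← hmp.setIntegral_preimage_emb e.measurableEmbedding, hpre, Measure.volume_eq_prod,
    setIntegral_prod_of_fiber (f := fun p => f (e p))
      (t := fun t => Set.univ.pi fun _ => Set.Icc 0 t)
      measurableSet_Icc (fun t => MeasurableSet.univ_pi fun _ => measurableSet_Icc) hmeas hfe,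
    intervalIntegral.integral_of_le ha, integral_Icc_eq_integral_Ioc, he]

lemma dite_lt_eq_snoc {n : ℕ} {α : Type*} (v : Fin n → α) (t : α) :
    (fun i : Fin (n + 1) => if h : (i : ℕ) < n then v ⟨i, h⟩ else t) = Fin.snoc v t := by
  funext i
  by_cases h : (i : ℕ) < n
  · simp only [Fin.snoc, h, dite_true, cast_eq]
    rfl
  · simp [Fin.snoc, h]

lemma iterate_cyclicShift (d j : ℕ) :
    (cyclicShift : (Fin d → ℝ) → Fin d → ℝ)^[j] =
      MeasurableEquiv.piCongrLeft (fun _ => ℝ) (finRotate d ^ j) := by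
  induction j with
  | zero =>
    funext x i
    exact (piCongrLeft_const_apply (finRotate d ^ 0) x i).symm
  | succ j ih =>
    funext x i
    rw [Function.iterate_succ_apply', ih]
    simp only [cyclicShift, piCongrLeft_const_apply, pow_succ', Equiv.Perm.mul_def,
      Equiv.symm_trans_apply]

lemma finRotate_pow_val_apply_last (n : ℕ) (k : Fin (n + 1)) :
    (finRotate (n + 1) ^ (k : ℕ)) (Fin.last n) = finCycle (Fin.last n) k := by
  rw [Equiv.Perm.coe_pow, ← finCycle_eq_finRotate_iterate, finCycle_apply, finCycle_apply]
  exact add_comm _ _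

/-- For `g` Lebesgue integrable on the cube `[0, 1/2]^d`, the integral
over the cube decomposes into `d` pyramid integrals:
`∫_{[0,1/2]^d} g(k) dk = ∑_{j=0}^{d-1} ∫_0^{1/2} ∫_{[0,k_d]^{d-1}}
  g(σ^j(k₁, …, k_{d-1}, k_d)) dk₁ ⋯ dk_{d-1} dk_d`. -/
theorem cube_integral_eq_sum_pyramids (d : ℕ) (hd : 1 ≤ d) (g : (Fin d → ℝ) → ℂ)
    (hg : IntegrableOn g (Set.univ.pi fun _ => Set.Icc (0 : ℝ) (1 / 2))) :
    ∫ k in Set.univ.pi fun _ => Set.Icc (0 : ℝ) (1 / 2), g k =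
      ∑ j ∈ Finset.range d,
        ∫ t in (0 : ℝ)..(1 / 2),
          ∫ v in Set.univ.pi fun _ : Fin (d - 1) => Set.Icc (0 : ℝ) t,
            g (cyclicShift^[j]
              fun i : Fin d => if h : (i : ℕ) < d - 1 then v ⟨i, h⟩ else t) := by
  obtain ⟨n, rfl⟩ : ∃ n, d = n + 1 := ⟨d - 1, by omega⟩
  simp only [Nat.add_sub_cancel]
  simp only [dite_lt_eq_snoc]
  rw [setIntegral_pi_Icc_eq_sum_pyramid hg, ← Fin.sum_univ_eq_sum_range,
    ← Equiv.sum_comp (finCycle (Fin.last n))]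
  refine Finset.sum_congr rfl fun k _ => ?_
  have hgk : IntegrableOn g (pyramid (1 / 2) (finCycle (Fin.last n) k)) :=
    hg.mono_set (pyramid_subset_pi _ _)
  rw [← finRotate_pow_val_apply_last, ← integrableOn_pyramid_comp_piCongrLeft_iff] at hgk
  rw [iterate_cyclicShift, ← finRotate_pow_val_apply_last,
    ← setIntegral_pyramid_comp_piCongrLeft]
  exact setIntegral_pyramid_last (by norm_num) hgk
end
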